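/- arXiv:1109.0348 — 6 statements merged into one kernel-verified Lean document; each statement's English description precedes it below -/
import Mathlib

section
/- Let T ∈ T(C^n, m) be an upper triangular tensor (t_{i_1...i_m} = 0 whenever min{i_2,...,i_m} < i_1) with all diagonal entries t_{i...i} ≠ 0. Then the system T x^{m-1} = 0 has no nonzero solution x ∈ C^n. -/
/-!
Let `i` be the largest index with `x i ≠ 0`. In the `i`-th equation, triangularity kills every
term in which some index lies below `i`, and the vanishing of `x` above `i` kills every term in
which some index lies above `i`; what remains is `t_{i…i} * x i ^ (m-1) = 0`.
-/

open Finset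

variable {ι R : Type*} [Fintype ι] [LinearOrder ι]

lemma exists_ne_zero_and_forall_gt_eq_zero [Zero R] {x : ι → R} (hx : x ≠ 0) :
    ∃ i, x i ≠ 0 ∧ ∀ j, i < j → x j = 0 := by
  classical
  obtain ⟨i₀, hi₀⟩ := Function.ne_iff.mp hx
  obtain ⟨i, hi, hmax⟩ :=
    (univ.filter (x · ≠ 0)).exists_max_image id ⟨i₀, by simpa using hi₀⟩
  refine ⟨i, by simpa using hi, fun j hij => ?_⟩
  by_contra hxj
  exact (hmax j (by simpa using hxj)).not_gt hij

lemma sum_mul_prod_eq_diag_mul_pow_of_upperTriangular [CommSemiring R] {k : ℕ}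
    (t : ι → (Fin k → ι) → R) (i : ι) (htri : ∀ f, (∃ j, f j < i) → t i f = 0)
    (x : ι → R) (hx : ∀ j, i < j → x j = 0) :
    ∑ f : Fin k → ι, t i f * ∏ j, x (f j) = t i (fun _ => i) * x i ^ k := by
  rw [sum_eq_single (fun _ => i)]
  · simp [prod_const]
  · intro f _ hf
    obtain ⟨j, hj⟩ := Function.ne_iff.mp hf
    rcases hj.lt_or_gt with hlt | hgt
    · rw [htri f ⟨j, hlt⟩, zero_mul]
    · rw [prod_eq_zero (mem_univ j) (hx _ hgt), mul_zero]
  · simp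

theorem stmt4_general (n k : ℕ)
    (t : Fin n → (Fin k → Fin n) → ℂ)
    (htri : ∀ i f, (∃ j, f j < i) → t i f = 0)
    (hdiag : ∀ i, t i (fun _ => i) ≠ 0) :
    ¬ ∃ x : Fin n → ℂ, x ≠ 0 ∧
        ∀ i, ∑ f : Fin k → Fin n, t i f * ∏ j, x (f j) = 0 := by
  rintro ⟨x, hx, hsol⟩
  obtain ⟨i, hxi, hgt⟩ := exists_ne_zero_and_forall_gt_eq_zero hx
  have hi := hsol i
  rw [sum_mul_prod_eq_diag_mul_pow_of_upperTriangular t i (htri i) x hgt] at hi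
  exact mul_ne_zero (hdiag i) (pow_ne_zero k hxi) hi

/-- An upper triangular tensor (t i f = 0 whenever some rest index f j < i) of order
m = k + 1 with nonzero diagonal entries admits no nonzero solution of T x^{m-1} = 0. -/
theorem stmt4 (n k : ℕ) (hk : 1 ≤ k)
    (t : Fin n → (Fin k → Fin n) → ℂ)
    (htri : ∀ i f, (∃ j, f j < i) → t i f = 0)
    (hdiag : ∀ i, t i (fun _ => i) ≠ 0) :
    ¬ ∃ x : Fin n → ℂ, x ≠ 0 ∧
        ∀ i, ∑ f : Fin k → Fin n, t i f * ∏ j, x (f j) = 0 :=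
  stmt4_general n k t htri hdiag
end

section
/- Let T ∈ T(C^n, m) be an upper triangular tensor. Then λ ∈ C is an eigenvalue of T (i.e., (λE − T)x^{m-1} = 0 has a nonzero solution x ∈ C^n) if and only if λ = t_{i...i} for some i ∈ {1,...,n}. -/
/-!
By triangularity, row `i` of `(λE - T)x^{m-1}` only involves `x_s` for `s ≥ i`, and as a
polynomial in `x_i` its leading term is `(λ - t_{i…i}) x_i^{m-1}`: the only index tuple with
all entries equal to `i` is the diagonal one.

If `x ≠ 0` is an eigenvector and `x_i` is its last nonzero coordinate, row `i` reduces to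
`(λ - t_{i…i}) x_i^{m-1} = 0`, so `λ = t_{i…i}`. Conversely, let `i` be the least index with
`λ = t_{i…i}`; put `x_i = 1` and `x_s = 0` for `s > i`, and solve rows `i - 1, …, 1` in turn
for `x_r`. Each is a polynomial of degree `m - 1 ≥ 1` in `x_r` with leading coefficient
`λ - t_{r…r} ≠ 0`, hence has a complex root, and changing `x_r` leaves the rows `s > r` intact.
-/

open Finset Polynomial

namespace Hypermatrix

variable {n k : ℕ}

section CommRing

variable {R : Type*} [CommRing R] (t : Fin n → (Fin k → Fin n) → R) (lam : R)

/-- The `i`-th entry of `(λE - T)x^{m-1}`, for the tensor `T` of order `m = k + 1` given by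
`t i f = t_{i f(0) … f(k-1)}`. -/
def eigenResidual (x : Fin n → R) (i : Fin n) : R :=
  lam * x i ^ k - ∑ f : Fin k → Fin n, t i f * ∏ j, x (f j)

def IsUpperTriangular : Prop :=
  ∀ i f, (∃ j, f j < i) → t i f = 0

variable {t}

theorem IsUpperTriangular.eigenResidual_congr (ht : IsUpperTriangular t) {x y : Fin n → R}
    {i : Fin n} (hxy : ∀ s, i ≤ s → x s = y s) :
    eigenResidual t lam x i = eigenResidual t lam y i := by
  unfold eigenResidual
  rw [hxy i le_rfl]
  congr 1
  refine sum_congr rfl fun f _ => ?_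
  by_cases hf : ∃ j, f j < i
  · simp only [ht i f hf, zero_mul]
  · simp only [not_exists, not_lt] at hf
    rw [prod_congr rfl fun j _ => hxy (f j) (hf j)]

theorem IsUpperTriangular.eigenResidual_eq_of_forall_gt (ht : IsUpperTriangular t)
    {x : Fin n → R} {i : Fin n} (hx : ∀ s, i < s → x s = 0) :
    eigenResidual t lam x i = (lam - t i (fun _ => i)) * x i ^ k := by
  unfold eigenResidual
  rw [sum_eq_single (fun _ => i), prod_const, card_univ, Fintype.card_fin]
  · ring
  · intro f _ hf
    by_cases hlt : ∃ j, f j < i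
    · rw [ht i f hlt, zero_mul]
    · simp only [not_exists, not_lt] at hlt
      obtain ⟨j, hj⟩ : ∃ j, i < f j := by
        by_contra! hle
        exact hf (funext fun j => (hle j).antisymm (hlt j))
      rw [prod_eq_zero (mem_univ j) (hx _ hj), mul_zero]
  · exact fun h => absurd (mem_univ _) h

theorem IsUpperTriangular.exists_eq_diagonal_of_eigenvector [NoZeroDivisors R]
    (ht : IsUpperTriangular t) {x : Fin n → R} (hx0 : x ≠ 0)
    (hx : ∀ i, eigenResidual t lam x i = 0) :
    ∃ i, lam = t i (fun _ => i) := by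
  obtain ⟨i, hxi, hmax⟩ := wellFounded_gt.has_min {s | x s ≠ 0} (Function.ne_iff.mp hx0)
  have hzero : ∀ s, i < s → x s = 0 := fun s hs => not_not.mp fun h => hmax s h hs
  have := hx i
  rw [ht.eigenResidual_eq_of_forall_gt lam hzero] at this
  exact ⟨i, sub_eq_zero.mp ((mul_eq_zero.mp this).resolve_right (pow_ne_zero k hxi))⟩

end CommRing

section Field

variable {K : Type*} [Field K] (t : Fin n → (Fin k → Fin n) → K) (lam : K)

noncomputable def rowPolynomial (x : Fin n → K) (r : Fin n) : K[X] :=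
  C lam * X ^ k -
    ∑ f : Fin k → Fin n, C (t r f * ∏ j with f j ≠ r, x (f j)) * X ^ #{j | f j = r}

theorem eval_rowPolynomial (x : Fin n → K) (r : Fin n) (z : K) :
    (rowPolynomial t lam x r).eval z = eigenResidual t lam (Function.update x r z) r := by
  simp only [rowPolynomial, eigenResidual, eval_sub, eval_mul, eval_C, eval_pow, eval_X,
    eval_finsetSum, Function.update_self, Function.update_apply, prod_ite, prod_const]
  congr 1
  refine sum_congr rfl fun f _ => ?_
  ring

theorem natDegree_rowPolynomial_le (x : Fin n → K) (r : Fin n) :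
    (rowPolynomial t lam x r).natDegree ≤ k := by
  refine (natDegree_sub_le_iff_left (natDegree_sum_le_of_forall_le _ _ fun f _ => ?_)).mpr
    (natDegree_C_mul_X_pow_le _ _)
  exact (natDegree_C_mul_X_pow_le _ _).trans ((card_filter_le _ _).trans_eq (card_fin k))

theorem coeff_rowPolynomial (x : Fin n → K) (r : Fin n) :
    (rowPolynomial t lam x r).coeff k = lam - t r (fun _ => r) := by
  simp only [rowPolynomial, coeff_sub, coeff_C_mul_X_pow, if_true, finsetSum_coeff]
  rw [sum_eq_single (fun _ => r)]
  · simp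
  · intro f _ hf
    rw [if_neg]
    intro hcard
    refine hf (funext fun j => (card_filter_eq_iff (p := fun j => f j = r)).mp ?_ j (mem_univ j))
    rw [card_univ, Fintype.card_fin]
    exact hcard.symm
  · exact fun h => absurd (mem_univ _) h

variable [IsAlgClosed K] {t lam}

theorem exists_eigenResidual_update_eq_zero (hk : k ≠ 0) {r : Fin n}
    (hr : lam ≠ t r (fun _ => r)) (x : Fin n → K) :
    ∃ z, eigenResidual t lam (Function.update x r z) r = 0 := by
  have hdeg : (rowPolynomial t lam x r).natDegree = k :=
    natDegree_eq_of_le_of_coeff_ne_zero (natDegree_rowPolynomial_le t lam x r)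
      (by rwa [coeff_rowPolynomial, sub_ne_zero])
  obtain ⟨z, hz⟩ := IsAlgClosed.exists_root _
    (natDegree_pos_iff_degree_pos.mp (hdeg ▸ Nat.pos_of_ne_zero hk)).ne'
  exact ⟨z, (eval_rowPolynomial t lam x r z).symm.trans hz⟩

theorem IsUpperTriangular.exists_partial_eigenvector (ht : IsUpperTriangular t) (hk : k ≠ 0)
    {i : Fin n} (hi : lam = t i (fun _ => i)) (hmin : ∀ r < i, lam ≠ t r (fun _ => r))
    {r : ℕ} (hr : r ≤ i) :
    ∃ x : Fin n → K, x i = 1 ∧ ∀ s : Fin n, r ≤ s → eigenResidual t lam x s = 0 := by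
  induction hr using Nat.decreasingInduction with
  | self =>
    refine ⟨Pi.single i 1, Pi.single_eq_same i 1, fun s hs => ?_⟩
    rw [ht.eigenResidual_eq_of_forall_gt lam fun s' hs' =>
      Pi.single_eq_of_ne (Fin.le_iff_val_le_val.mpr hs |>.trans_lt hs').ne' 1]
    rcases eq_or_ne s i with rfl | hsi
    · rw [← hi, sub_self, zero_mul]
    · rw [Pi.single_eq_of_ne hsi, zero_pow hk, mul_zero]
  | of_succ r hri ih =>
    obtain ⟨x, hxi, hx⟩ := ih
    set r' : Fin n := ⟨r, hri.trans i.isLt⟩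
    have hr'i : r' < i := hri
    obtain ⟨z, hz⟩ := exists_eigenResidual_update_eq_zero hk (hmin r' hr'i) x
    refine ⟨Function.update x r' z, by rw [Function.update_of_ne hr'i.ne', hxi], fun s hs => ?_⟩
    rcases (show r' ≤ s from hs).eq_or_lt with rfl | hr's
    · exact hz
    · rw [ht.eigenResidual_congr lam fun s' hs' =>
        Function.update_of_ne (hr's.trans_le hs').ne' z x]
      exact hx s hr's

theorem IsUpperTriangular.exists_eigenvector (ht : IsUpperTriangular t) (hk : k ≠ 0)
    {i : Fin n} (hi : lam = t i (fun _ => i)) :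
    ∃ x : Fin n → K, x ≠ 0 ∧ ∀ s, eigenResidual t lam x s = 0 := by
  obtain ⟨i, hi, hmin⟩ := wellFounded_lt.has_min {r | lam = t r (fun _ => r)} ⟨i, hi⟩
  obtain ⟨x, hxi, hx⟩ :=
    ht.exists_partial_eigenvector hk hi (fun r hr h => hmin r h hr) (Nat.zero_le i)
  exact ⟨x, fun h => one_ne_zero (hxi ▸ congrFun h i), fun s => hx s (Nat.zero_le s)⟩

end Field

end Hypermatrix

/-- For an upper triangular tensor T of order m = k + 1, λ is an eigenvalue
(i.e. (λE - T) x^{m-1} = 0 has a nonzero solution) iff λ is a diagonal entry of T. -/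
theorem stmt5 (n k : ℕ) (hk : 1 ≤ k)
    (t : Fin n → (Fin k → Fin n) → ℂ)
    (htri : ∀ i f, (∃ j, f j < i) → t i f = 0)
    (lam : ℂ) :
    (∃ x : Fin n → ℂ, x ≠ 0 ∧
        ∀ i, lam * (x i) ^ k - ∑ f : Fin k → Fin n, t i f * ∏ j, x (f j) = 0) ↔
    (∃ i : Fin n, lam = t i (fun _ => i)) := by
  have ht : Hypermatrix.IsUpperTriangular t := htri
  constructor
  · rintro ⟨x, hx0, hx⟩
    exact ht.exists_eq_diagonal_of_eigenvector lam hx0 hx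
  · rintro ⟨i, hi⟩
    exact ht.exists_eigenvector (Nat.one_le_iff_ne_zero.mp hk) hi
end

section
/- The composition of two upper triangular tensors is upper triangular: if U ∈ T(C^n,p) and V ∈ T(C^n,q) are upper triangular (p,q ≥ 2), then the tensor W = U ∘ V of order (p-1)(q-1)+1 defined by w_{i j_{(i_2,2)}...j_{(i_p,q)}} = Σ_{i_2,...,i_p} u_{i i_2...i_p} v_{i_2 j_{(i_2,2)}...j_{(i_2,q)}} ⋯ v_{i_p j_{(i_p,2)}...j_{(i_p,q)}} is upper triangular. -/
theorem upperTriangular_comp_summand_eq_zero {ι α β R : Type*} [LinearOrder ι] [Fintype α]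
    [CommMonoidWithZero R] {u : ι → (α → ι) → R} {v : ι → (β → ι) → R}
    (hu : ∀ i f, (∃ j, f j < i) → u i f = 0) (hv : ∀ i g, (∃ j, g j < i) → v i g = 0)
    {i : ι} {J : α × β → ι} (hJ : ∃ p, J p < i) (f : α → ι) :
    u i f * ∏ s, v (f s) (fun r => J (s, r)) = 0 := by
  obtain ⟨⟨s, r⟩, hsr⟩ := hJ
  by_cases hf : ∃ j, f j < i
  · rw [hu i f hf, zero_mul]
  · simp only [not_exists, not_lt] at hf
    have hvs : v (f s) (fun r => J (s, r)) = 0 := hv _ _ ⟨r, hsr.trans_le (hf s)⟩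
    rw [Finset.prod_eq_zero (Finset.mem_univ s) hvs, mul_zero]

theorem stmt6_general (n a b : ℕ)
    (u : Fin n → (Fin a → Fin n) → ℂ)
    (v : Fin n → (Fin b → Fin n) → ℂ)
    (hu : ∀ i f, (∃ j, f j < i) → u i f = 0)
    (hv : ∀ i g, (∃ j, g j < i) → v i g = 0) :
    ∀ (i : Fin n) (J : Fin a × Fin b → Fin n), (∃ p, J p < i) →
      ∑ f : Fin a → Fin n, u i f * ∏ s : Fin a, v (f s) (fun r => J (s, r)) = 0 :=
  fun _ _ hJ => Finset.sum_eq_zero fun f _ => upperTriangular_comp_summand_eq_zero hu hv hJ f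

/-- The composition of two upper triangular tensors is upper triangular. -/
theorem stmt6 (n a b : ℕ) (ha : 1 ≤ a) (hb : 1 ≤ b)
    (u : Fin n → (Fin a → Fin n) → ℂ)
    (v : Fin n → (Fin b → Fin n) → ℂ)
    (hu : ∀ i f, (∃ j, f j < i) → u i f = 0)
    (hv : ∀ i g, (∃ j, g j < i) → v i g = 0) :
    ∀ (i : Fin n) (J : Fin a × Fin b → Fin n), (∃ p, J p < i) →
      ∑ f : Fin a → Fin n, u i f * ∏ s : Fin a, v (f s) (fun r => J (s, r)) = 0 :=
  stmt6_general n a b u v hu hv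
end

section
/- Let i ≠ j, let m ≥ 2, and let k, h ≥ 1 and s ∈ {1, ..., min{h,k}(m−1)}. In the expansion of Tr(A^{(k+h)(m−1)}) = Σ_{i_1,...,i_{(k+h)(m−1)}} a_{i_1 i_2} a_{i_2 i_3} ⋯ a_{i_{(k+h)(m−1)} i_1} over an n×n matrix of commuting indeterminates, the number of cyclic index sequences producing the monomial (a_{ii})^{k(m−1)−s} (a_{ij})^s (a_{ji})^s (a_{jj})^{h(m−1)−s} equals C(k(m−1), s)·C(h(m−1)−1, s−1) + C(h(m−1), s)·C(k(m−1)−1, s−1), where C(·,·) denotes the binomial coefficient. -/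
/-!
A sequence with the prescribed transition counts only visits `i` and `j`, since every position
starts a transition that is counted. Hence it is a cyclic binary word with `a = k(m-1)` trues,
`b = h(m-1)` falses and `s` descents `true → false`; the other three counts are then forced,
as every letter is left once and entered once. Complementing swaps the roles of `a` and `b`,
so it suffices to count words starting with `true`. For those the cyclic descents are the
linear ones, and the linear count `C(a, s) C(b - 1, s - 1)` follows by induction on the length,
peeling off the first letter.
-/

open Finset Function

lemma card_filter_eq_add_bool {ι : Type*} [Fintype ι] (f : ι → Bool) (P : ι → Prop)
    [DecidablePred P] : #{i | P i} = #{i | f i = true ∧ P i} + #{i | f i = false ∧ P i} := by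
  rw [← card_filter_add_card_filter_not (s := univ.filter P) (fun i => f i = true)]
  simp only [filter_filter, Bool.not_eq_true, and_comm]

lemma card_filter_fin_cons {α : Type*} [Fintype α] [DecidableEq α] {n : ℕ} (x : α)
    (P : (Fin (n + 1) → α) → Prop) [DecidablePred P] :
    #{g | g 0 = x ∧ P g} = #{w : Fin n → α | P (Fin.cons x w)} := by
  refine card_nbij' Fin.tail (fun w => Fin.cons x w) ?_ ?_ ?_ ?_
  · intro g hg
    simp only [coe_filter, mem_univ, true_and, Set.mem_ofPred_eq] at hg ⊢
    rw [← hg.1, Fin.cons_self_tail]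
    exact hg.2
  · intro w hw
    simpa using hw
  · intro g hg
    simp only [coe_filter, mem_univ, true_and, Set.mem_ofPred_eq] at hg
    exact hg.1 ▸ Fin.cons_self_tail g
  · intro w _
    exact Fin.tail_cons _ _

section Transitions

variable {α β : Type*} [DecidableEq α] {N : ℕ}

def transitions (c : Fin N → α) (p q : α) : ℕ :=
  #{w | c w = p ∧ c (finRotate N w) = q}

lemma transitions_comp [DecidableEq β] {f : β → α} (hf : Injective f) (c : Fin N → β)
    (x y : β) :
    transitions (f ∘ c) (f x) (f y) = transitions c x y := by
  simp only [transitions, comp_apply, hf.eq_iff]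

lemma transitions_eq_zero_of_notMem_range {f : β → α} (c : Fin N → β) {p q : α}
    (h : p ∉ Set.range f ∨ q ∉ Set.range f) : transitions (f ∘ c) p q = 0 := by
  refine card_eq_zero.2 (filter_eq_empty_iff.2 fun w _ ⟨hp, hq⟩ => ?_)
  rcases h with h | h
  exacts [h ⟨_, hp⟩, h ⟨_, hq⟩]

lemma transitions_pos (c : Fin N → α) (w : Fin N) :
    0 < transitions c (c w) (c (finRotate N w)) :=
  card_pos.2 ⟨w, by simp⟩

lemma sum_transitions_right [Fintype α] (c : Fin N → α) (p : α) :
    ∑ q, transitions c p q = #{w | c w = p} := by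
  rw [card_eq_sum_card_fiberwise (f := fun w => c (finRotate N w)) (t := univ)
    (fun _ _ => mem_univ _)]
  simp only [filter_filter, transitions]

lemma sum_transitions_left [Fintype α] (c : Fin N → α) (q : α) :
    ∑ p, transitions c p q = #{w | c w = q} := by
  have hrot : #{w | c (finRotate N w) = q} = #{w | c w = q} := by
    simpa only [card_filter] using Equiv.sum_comp (finRotate N) fun w => if c w = q then 1 else 0
  rw [← hrot, card_eq_sum_card_fiberwise (f := c) (t := univ) (fun _ _ => mem_univ _)]
  simp only [filter_filter, transitions, and_comm]

-- The decidability instances are left arbitrary: for `α = Fin n` the filter is elaborated with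
-- `Nat.decidableForallFin`, not with `Fintype.decidableForallFintype`.
theorem card_transitions_eq_comp [DecidableEq β] [Fintype α] [Fintype β] {f : β → α}
    (hf : Injective f) (T : α → α → ℕ)
    (hT : ∀ p q, T p q ≠ 0 → p ∈ Set.range f ∧ q ∈ Set.range f)
    [DecidablePred fun c : Fin N → α => ∀ p q, transitions c p q = T p q]
    [DecidablePred fun g : Fin N → β => ∀ x y, transitions g x y = T (f x) (f y)] :
    #{c : Fin N → α | ∀ p q, transitions c p q = T p q} =
      #{g : Fin N → β | ∀ x y, transitions g x y = T (f x) (f y)} := by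
  rw [← card_image_of_injective _ (hf.comp_left (α := Fin N))]
  congr 1
  ext c
  simp only [mem_filter, mem_univ, true_and, mem_image]
  constructor
  · intro hc
    have hrange (w : Fin N) : c w ∈ Set.range f :=
      (hT _ _ (hc _ _ ▸ (transitions_pos c w).ne')).1
    choose g hg using hrange
    have hcg : f ∘ g = c := funext hg
    refine ⟨g, fun x y => ?_, hcg⟩
    rw [← transitions_comp hf, hcg, hc]
  · rintro ⟨g, hg, rfl⟩ p q
    by_cases hpq : p ∈ Set.range f ∧ q ∈ Set.range f
    · obtain ⟨⟨x, rfl⟩, ⟨y, rfl⟩⟩ := hpq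
      rw [transitions_comp hf, hg]
    · rw [transitions_eq_zero_of_notMem_range g (not_and_or.1 hpq)]
      exact (not_imp_comm.1 (hT p q) hpq).symm

end Transitions

section LinearWords

def trueCount {N : ℕ} (g : Fin N → Bool) : ℕ := #{w | g w = true}

def descents {L : ℕ} (g : Fin (L + 1) → Bool) : ℕ :=
  #{t : Fin L | g t.castSucc = true ∧ g t.succ = false}

lemma trueCount_cons {L : ℕ} (x : Bool) (w : Fin L → Bool) :
    trueCount (Fin.cons x w : Fin (L + 1) → Bool) = trueCount w + x.toNat := by
  simp only [trueCount, card_filter, Fin.sum_univ_succ, Fin.cons_zero, Fin.cons_succ]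
  cases x <;> simp [add_comm]

lemma descents_cons {L : ℕ} (x : Bool) (w : Fin (L + 1) → Bool) :
    descents (Fin.cons x w : Fin (L + 2) → Bool) = descents w + (x && !w 0).toNat := by
  simp only [descents, card_filter, Fin.sum_univ_succ, Fin.cons_zero, Fin.cons_succ,
    Fin.castSucc_zero]
  cases x <;> cases w 0 <;> simp [add_comm]

def wordCount (L : ℕ) (x : Bool) (a s : ℕ) : ℕ :=
  #{g : Fin (L + 1) → Bool | g 0 = x ∧ trueCount g = a ∧ descents g = s}

lemma wordCount_zero (x : Bool) (a s : ℕ) :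
    wordCount 0 x a s = if x.toNat = a ∧ 0 = s then 1 else 0 := by
  rw [wordCount, card_filter_fin_cons, card_filter, Fintype.sum_unique]
  simp only [trueCount_cons]
  simp [descents, trueCount]

lemma wordCount_succ (L : ℕ) (x : Bool) (a s : ℕ) :
    wordCount (L + 1) x a s = ∑ y, #{w : Fin (L + 1) → Bool |
      w 0 = y ∧ trueCount w + x.toNat = a ∧ descents w + (x && !y).toNat = s} := by
  rw [wordCount, card_filter_fin_cons, card_eq_sum_card_fiberwise (f := (· 0)) (t := univ)
    fun _ _ => mem_univ _]
  refine sum_congr rfl fun y _ => congrArg card ?_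
  ext w
  simp only [mem_filter, mem_univ, true_and, trueCount_cons, descents_cons]
  grind

lemma wordCount_true_zero (L s : ℕ) : wordCount L true 0 s = 0 := by
  cases L
  · simp [wordCount_zero]
  · simp [wordCount_succ]

lemma wordCount_false_all_true (L s : ℕ) : wordCount L false (L + 1) s = 0 := by
  refine card_eq_zero.2 (filter_eq_empty_iff.2 fun g _ ⟨hg0, hcount, _⟩ => ?_)
  have hall : ∀ w ∈ univ, g w = true :=
    card_filter_eq_iff.1 (by rw [card_univ, Fintype.card_fin]; exact hcount)
  simp [hall 0 (mem_univ _)] at hg0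

lemma wordCount_succ_true_succ_zero (L a : ℕ) :
    wordCount (L + 1) true (a + 1) 0 = wordCount L true a 0 := by
  rw [wordCount_succ, Fintype.sum_bool]
  simp [wordCount]

lemma wordCount_succ_true_succ_succ (L a s : ℕ) :
    wordCount (L + 1) true (a + 1) (s + 1) =
      wordCount L true a (s + 1) + wordCount L false a s := by
  rw [wordCount_succ, Fintype.sum_bool]
  simp [wordCount]

lemma wordCount_succ_false (L a s : ℕ) :
    wordCount (L + 1) false a s = wordCount L true a s + wordCount L false a s := by
  rw [wordCount_succ, Fintype.sum_bool]
  simp [wordCount]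

-- A word starting with `true` with `s ≥ 1` descents is a run of `s` or `s + 1` blocks of trues
-- alternating with `s` blocks of falses: `C(a, s)` compositions for the trues (the last block
-- may be empty) and `C(b - 1, s - 1)` for the falses.
def wordCountFormula : Bool → ℕ → ℕ → ℕ → ℕ
  | true, a, b, s =>
      if a = 0 then 0 else if b = 0 then (if s = 0 then 1 else 0)
      else if s = 0 then 0 else a.choose s * (b - 1).choose (s - 1)
  | false, a, b, s => if b = 0 then 0 else a.choose s * (b - 1).choose s

lemma wordCountFormula_true_succ_zero {a b : ℕ} (hab : a + b ≠ 0) :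
    wordCountFormula true (a + 1) b 0 = wordCountFormula true a b 0 := by
  rcases a with _ | a <;> rcases b with _ | b <;> simp_all [wordCountFormula]

lemma wordCountFormula_true_succ_succ (a b s : ℕ) :
    wordCountFormula true (a + 1) b (s + 1) =
      wordCountFormula true a b (s + 1) + wordCountFormula false a b s := by
  rcases a with _ | a <;> rcases b with _ | b <;> simp [wordCountFormula, Nat.choose_succ_succ]
  ring

lemma wordCountFormula_false_succ {a b : ℕ} (hab : a + b ≠ 0) (s : ℕ) :
    wordCountFormula false a (b + 1) s =
      wordCountFormula true a b s + wordCountFormula false a b s := by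
  rcases a with _ | a <;> rcases b with _ | b <;> simp_all [wordCountFormula]
  all_goals rcases s with _ | s <;> simp [Nat.choose_succ_succ]
  ring

theorem wordCount_eq_formula (L : ℕ) (x : Bool) {a b : ℕ} (hab : a + b = L + 1) (s : ℕ) :
    wordCount L x a s = wordCountFormula x a b s := by
  induction L generalizing x a b s with
  | zero =>
    obtain ⟨rfl, rfl⟩ | ⟨rfl, rfl⟩ : a = 0 ∧ b = 1 ∨ a = 1 ∧ b = 0 := by omega
    all_goals cases x <;> rcases s with _ | s <;> simp [wordCount_zero, wordCountFormula]
  | succ L ih =>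
    cases x
    · rcases b with _ | b
      · obtain rfl : a = L + 2 := hab
        simp [wordCount_false_all_true, wordCountFormula]
      · rw [wordCount_succ_false, ih true (b := b) (by omega), ih false (b := b) (by omega),
          wordCountFormula_false_succ (by omega)]
    · rcases a with _ | a
      · simp [wordCount_true_zero, wordCountFormula]
      rcases s with _ | s
      · rw [wordCount_succ_true_succ_zero, ih true (b := b) (by omega),
          wordCountFormula_true_succ_zero (by omega)]
      · rw [wordCount_succ_true_succ_succ, ih true (b := b) (by omega),
          ih false (b := b) (by omega), wordCountFormula_true_succ_succ]

end LinearWords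

section CyclicWords

variable {N : ℕ}

lemma transitions_true_false_eq_descents {L : ℕ} {g : Fin (L + 1) → Bool} (hg : g 0 = true) :
    transitions g true false = descents g := by
  simp only [transitions, descents, card_filter]
  rw [Fin.sum_univ_castSucc, finRotate_last, hg]
  simp only [Bool.true_eq_false, and_false, ite_false, add_zero]
  refine sum_congr rfl fun t _ => ?_
  rw [finRotate_apply, Fin.coeSucc_eq_succ]

lemma trueCount_add_card_false (g : Fin N → Bool) : trueCount g + #{w | g w = false} = N := by
  simpa [trueCount] using card_filter_add_card_filter_not (s := univ) fun w => g w = true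

lemma transitions_true_false_eq_false_true (g : Fin N → Bool) :
    transitions g true false = transitions g false true := by
  have hout := sum_transitions_right g true
  have hin := sum_transitions_left g true
  rw [Fintype.sum_bool] at hout hin
  omega

lemma transitions_eq_iff {g : Fin N → Bool} {a b s : ℕ} (hN : a + b = N) (hsa : s ≤ a)
    (hsb : s ≤ b) :
    (transitions g true true = a - s ∧ transitions g true false = s ∧
      transitions g false true = s ∧ transitions g false false = b - s) ↔
      trueCount g = a ∧ transitions g true false = s := by
  have hfromTrue := sum_transitions_right g true
  have hfromFalse := sum_transitions_right g false
  have hcount := trueCount_add_card_false g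
  have hswap := transitions_true_false_eq_false_true g
  rw [Fintype.sum_bool] at hfromTrue hfromFalse
  rw [trueCount] at hcount ⊢
  omega

lemma card_head_true_cyclic {L a b : ℕ} (hab : a + b = L + 1) (s : ℕ) :
    #{g : Fin (L + 1) → Bool | g 0 = true ∧ trueCount g = a ∧ transitions g true false = s} =
      wordCountFormula true a b s := by
  rw [← wordCount_eq_formula L true hab, wordCount]
  refine congrArg card (filter_congr fun g _ => ?_)
  constructor
  · rintro ⟨hg, ha, hs⟩
    exact ⟨hg, ha, transitions_true_false_eq_descents hg ▸ hs⟩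
  · rintro ⟨hg, ha, hs⟩
    exact ⟨hg, ha, (transitions_true_false_eq_descents hg).trans hs⟩

lemma trueCount_not_comp_add (g : Fin N → Bool) : trueCount (not ∘ g) + trueCount g = N := by
  have hnot : trueCount (not ∘ g) = #{w | g w = false} := by simp [trueCount]
  rw [hnot, add_comm, trueCount_add_card_false]

lemma transitions_not_comp_true_false (g : Fin N → Bool) :
    transitions (not ∘ g) true false = transitions g true false := by
  have h := transitions_comp Bool.not_injective g false true
  rw [Bool.not_false, Bool.not_true] at h
  rw [h, transitions_true_false_eq_false_true]

lemma card_head_false_cyclic [NeZero N] {a b : ℕ} (hab : a + b = N) (s : ℕ) :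
    #{g : Fin N → Bool | g 0 = false ∧ trueCount g = a ∧ transitions g true false = s} =
      #{g : Fin N → Bool | g 0 = true ∧ trueCount g = b ∧ transitions g true false = s} := by
  refine card_nbij' (not ∘ ·) (not ∘ ·) ?_ ?_ (fun g _ => by simp [comp_def])
    (fun g _ => by simp [comp_def])
  all_goals
    intro g hg
    simp only [coe_filter, mem_univ, true_and, Set.mem_ofPred_eq] at hg ⊢
    obtain ⟨hg0, hcount, hs⟩ := hg
    refine ⟨by simp [hg0], ?_, (transitions_not_comp_true_false g).trans hs⟩
    have := trueCount_not_comp_add g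
    omega

theorem card_trueCount_transitions {a b s : ℕ} (hN : a + b = N) (hs : 1 ≤ s) (hsa : s ≤ a)
    (hsb : s ≤ b) :
    #{g : Fin N → Bool | trueCount g = a ∧ transitions g true false = s} =
      a.choose s * (b - 1).choose (s - 1) + b.choose s * (a - 1).choose (s - 1) := by
  obtain ⟨L, rfl⟩ : ∃ L, N = L + 1 := ⟨N - 1, by omega⟩
  rw [card_filter_eq_add_bool (· 0), card_head_true_cyclic hN, card_head_false_cyclic hN,
    card_head_true_cyclic (add_comm b a ▸ hN)]
  simp [wordCountFormula, show a ≠ 0 by omega, show b ≠ 0 by omega, show s ≠ 0 by omega]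

end CyclicWords

theorem stmt7_general (n m k h s : ℕ) (i j : Fin n) (hij : i ≠ j)
    (hs1 : 1 ≤ s) (hs2 : s ≤ min h k * (m - 1)) :
    (Finset.univ.filter (fun c : Fin ((k + h) * (m - 1)) → Fin n =>
        ∀ p q : Fin n,
          (Finset.univ.filter (fun w : Fin ((k + h) * (m - 1)) =>
              c w = p ∧ c (finRotate _ w) = q)).card =
            (if p = i ∧ q = i then k * (m - 1) - s
             else if p = i ∧ q = j then s
             else if p = j ∧ q = i then s
             else if p = j ∧ q = j then h * (m - 1) - s
             else 0))).card =
      Nat.choose (k * (m - 1)) s * Nat.choose (h * (m - 1) - 1) (s - 1) +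
      Nat.choose (h * (m - 1)) s * Nat.choose (k * (m - 1) - 1) (s - 1) := by
  have hsk : s ≤ k * (m - 1) := hs2.trans (Nat.mul_le_mul_right _ (min_le_right h k))
  have hsh : s ≤ h * (m - 1) := hs2.trans (Nat.mul_le_mul_right _ (min_le_left h k))
  have hinj : Injective fun x : Bool => if x then i else j := by
    intro x y hxy
    cases x <;> cases y <;> simp_all [eq_comm]
  simp only [← transitions.eq_1]
  rw [card_transitions_eq_comp hinj]
  case hT =>
    intro p q hpq
    simp only [Set.mem_range, Bool.exists_bool, Bool.false_eq_true, ite_false, ite_true]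
    split_ifs at hpq <;> simp_all
  rw [← card_trueCount_transitions (add_mul k h (m - 1)).symm hs1 hsk hsh]
  refine congrArg card (filter_congr fun g _ => ?_)
  rw [← transitions_eq_iff (add_mul k h (m - 1)).symm hsk hsh]
  simp only [Bool.forall_bool, Bool.false_eq_true, ite_true, ite_false, hij, hij.symm, and_true,
    and_false]
  tauto

/-- Counting lemma for the trace expansion.  A cyclic index sequence
`c : Fin N → Fin n` (N = (k+h)(m-1)) contributes the monomial
`∏_s a_{c s, c (s+1)}` to Tr(A^N); the number of sequences whose monomial equals
`(a_{ii})^{k(m-1)-s} (a_{ij})^s (a_{ji})^s (a_{jj})^{h(m-1)-s}` is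
`C(k(m-1), s) C(h(m-1)-1, s-1) + C(h(m-1), s) C(k(m-1)-1, s-1)`.
Equality of monomials is expressed by counting, for each pair (p, q), the number of
positions of the factor `a_{pq}`. -/
theorem stmt7 (n m k h s : ℕ) (i j : Fin n) (hij : i ≠ j)
    (hm : 2 ≤ m) (hk : 1 ≤ k) (hh : 1 ≤ h)
    (hs1 : 1 ≤ s) (hs2 : s ≤ min h k * (m - 1)) :
    (Finset.univ.filter (fun c : Fin ((k + h) * (m - 1)) → Fin n =>
        ∀ p q : Fin n,
          (Finset.univ.filter (fun w : Fin ((k + h) * (m - 1)) =>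
              c w = p ∧ c (finRotate _ w) = q)).card =
            (if p = i ∧ q = i then k * (m - 1) - s
             else if p = i ∧ q = j then s
             else if p = j ∧ q = i then s
             else if p = j ∧ q = j then h * (m - 1) - s
             else 0))).card =
      Nat.choose (k * (m - 1)) s * Nat.choose (h * (m - 1) - 1) (s - 1) +
      Nat.choose (h * (m - 1)) s * Nat.choose (k * (m - 1) - 1) (s - 1) :=
  stmt7_general n m k h s i j hij hs1 hs2
end

section
/- Let T ∈ T(C^n, m) with n ≥ 2 and suppose there is k with 1 ≤ k ≤ n−1 such that t_{i i_2 ... i_m} = 0 for every i ∈ {k+1,...,n} whenever {i_2,...,i_m} ∩ {1,...,k} ≠ ∅. Let U be the sub-tensor of T on indices {1,...,k} and V the sub-tensor on {k+1,...,n}. If U u^{m-1} = 0 has a nonzero solution u ∈ C^k, then T x^{m-1} = 0 has a nonzero solution x ∈ C^n (namely x = (u, 0)); and if T x^{m-1} = 0 has a nonzero solution x = (u, v) with v ≠ 0, then V v^{m-1} = 0. -/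
/-!
If `x = (u, 0)`, only multi-indices inside the first block contribute to `T x^{m-1}`;
these give `U u^{m-1}` in the first `k` rows, while in the last rows their coefficients vanish by the block hypothesis. Conversely, in a row
of the second block only multi-indices inside the second block carry nonzero coefficients, so
that row of `T x^{m-1}` is the corresponding row of `V v^{m-1}`.
-/

open Function

theorem Fintype.sum_pi_eq_sum_comp_of_injective {ι α β M : Type*} [Fintype ι] [DecidableEq ι]
    [Fintype α] [Fintype β] [AddCommMonoid M] {e : α → β} (he : Injective e)
    (F : (ι → β) → M) (hF : ∀ f : ι → β, (∃ j, f j ∉ Set.range e) → F f = 0) :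
    ∑ f, F f = ∑ g : ι → α, F fun j => e (g j) := by
  refine (Fintype.sum_of_injective (e ∘ ·) he.comp_left _ _ (fun f hf => hF f ?_)
    fun _ => rfl).symm
  by_contra! hmem
  choose g hg using hmem
  exact hf ⟨g, funext hg⟩

theorem sum_mul_prod_append_zero {k l K : ℕ} {R : Type*} [CommSemiring R]
    (c : (Fin K → Fin (k + l)) → R) (u : Fin k → R) :
    ∑ f, c f * ∏ j, Fin.append u (0 : Fin l → R) (f j) =
      ∑ g : Fin K → Fin k, c (fun j => Fin.castAdd l (g j)) * ∏ j, u (g j) := by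
  rw [Fintype.sum_pi_eq_sum_comp_of_injective (Fin.castAdd_injective k l)]
  · simp only [Fin.append_left]
  · rintro f ⟨j, hj⟩
    refine mul_eq_zero_of_right _ (Finset.prod_eq_zero (Finset.mem_univ j) ?_)
    generalize f j = b at hj ⊢
    induction b using Fin.addCases with
    | left i => exact absurd ⟨i, rfl⟩ hj
    | right i => simp

theorem sum_mul_prod_eq_of_coeff_eq_zero_of_lt {k l K : ℕ} {R : Type*} [CommSemiring R]
    (c : (Fin K → Fin (k + l)) → R) (hc : ∀ f, (∃ j, (f j : ℕ) < k) → c f = 0)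
    (x : Fin (k + l) → R) :
    ∑ f, c f * ∏ j, x (f j) =
      ∑ g : Fin K → Fin l, c (fun j => Fin.natAdd k (g j)) * ∏ j, x (Fin.natAdd k (g j)) := by
  rw [Fintype.sum_pi_eq_sum_comp_of_injective (Fin.natAdd_injective l k)]
  rintro f ⟨j, hj⟩
  rw [hc f ⟨j, by simpa [Fin.range_natAdd] using hj⟩, zero_mul]

theorem stmt16_general (k l K : ℕ) (hK : 1 ≤ K)
    (t : Fin (k + l) → (Fin K → Fin (k + l)) → ℂ)
    (hblock : ∀ (i : Fin (k + l)), k ≤ (i : ℕ) →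
      ∀ f : Fin K → Fin (k + l), (∃ j, ((f j : ℕ) < k)) → t i f = 0) :
    ((∃ u : Fin k → ℂ, u ≠ 0 ∧
        ∀ i : Fin k, ∑ f : Fin K → Fin k,
          t (Fin.castAdd l i) (fun j => Fin.castAdd l (f j)) * ∏ j, u (f j) = 0) →
      ∃ x : Fin (k + l) → ℂ, x ≠ 0 ∧
        ∀ i, ∑ f : Fin K → Fin (k + l), t i f * ∏ j, x (f j) = 0) ∧
    (∀ x : Fin (k + l) → ℂ, x ≠ 0 →
      (∀ i, ∑ f : Fin K → Fin (k + l), t i f * ∏ j, x (f j) = 0) →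
      (fun i : Fin l => x (Fin.natAdd k i)) ≠ 0 →
      ∀ i : Fin l, ∑ f : Fin K → Fin l,
        t (Fin.natAdd k i) (fun j => Fin.natAdd k (f j)) *
          ∏ j, x (Fin.natAdd k (f j)) = 0) := by
  refine ⟨fun ⟨u, hu, hsol⟩ => ⟨Fin.append u 0, ?_, fun i => ?_⟩, fun x _ hsol _ i => ?_⟩
  · intro h
    exact hu (funext fun i => by simpa using congrFun h (Fin.castAdd l i))
  · rw [sum_mul_prod_append_zero]
    induction i using Fin.addCases with
    | left i => exact hsol i
    | right i =>
      refine Finset.sum_eq_zero fun g _ => ?_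
      rw [hblock _ (by simp) _ ⟨⟨0, hK⟩, by simp⟩, zero_mul]
  · rw [← sum_mul_prod_eq_of_coeff_eq_zero_of_lt _ (hblock _ (by simp))]
    exact hsol _

/-- Block structure.  Let T be a tensor of order m = K + 1 and dimension n = k + l
(k, l ≥ 1), whose rows indexed by the last l indices vanish whenever some rest index
lies in the first block.  Let U and V be the sub-tensors on the first k and last l
indices.  Then: a nonzero solution u of U u^{m-1} = 0 yields the nonzero solution
x = (u, 0) of T x^{m-1} = 0; and if x = (u, v) is a nonzero solution of
T x^{m-1} = 0 with v ≠ 0, then V v^{m-1} = 0. -/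
theorem stmt16 (k l K : ℕ) (hk : 1 ≤ k) (hl : 1 ≤ l) (hK : 1 ≤ K)
    (t : Fin (k + l) → (Fin K → Fin (k + l)) → ℂ)
    (hblock : ∀ (i : Fin (k + l)), k ≤ (i : ℕ) →
      ∀ f : Fin K → Fin (k + l), (∃ j, ((f j : ℕ) < k)) → t i f = 0) :
    ((∃ u : Fin k → ℂ, u ≠ 0 ∧
        ∀ i : Fin k, ∑ f : Fin K → Fin k,
          t (Fin.castAdd l i) (fun j => Fin.castAdd l (f j)) * ∏ j, u (f j) = 0) →
      ∃ x : Fin (k + l) → ℂ, x ≠ 0 ∧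
        ∀ i, ∑ f : Fin K → Fin (k + l), t i f * ∏ j, x (f j) = 0) ∧
    (∀ x : Fin (k + l) → ℂ, x ≠ 0 →
      (∀ i, ∑ f : Fin K → Fin (k + l), t i f * ∏ j, x (f j) = 0) →
      (fun i : Fin l => x (Fin.natAdd k i)) ≠ 0 →
      ∀ i : Fin l, ∑ f : Fin K → Fin l,
        t (Fin.natAdd k i) (fun j => Fin.natAdd k (f j)) *
          ∏ j, x (Fin.natAdd k (f j)) = 0) :=
  stmt16_general k l K hK t hblock
end

section
/- Let A = (a_{pq}) be an n×n matrix of commuting indeterminates, m ≥ 2, fix i ∈ {1,...,n}, and let ĝ_i = Σ_{i_2,...,i_m=1}^n t_{i i_2...i_m} ∂/∂a_{i i_2} ⋯ ∂/∂a_{i i_m} be the associated differential operator. Then for every k ≥ 0, (ĝ_i)^k applied to Tr(A^{(m-1)k}) and evaluated at A = 0 equals ((m-1)k)! · (t_{i i ... i})^k. -/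
/-!
The operator `ĝ_i` only differentiates in the variables `a_{iq}` of row `i`. A monomial
`∏_s a_{c_s c_{s+1}}` of `Tr(A^N)` with some `c_s ≠ i` therefore keeps its factor
`a_{c_s c_{s+1}}` under every power of `ĝ_i` and vanishes at `A = 0`. The only remaining
monomial is `a_{ii}^N`, and `ĝ_i a_{ii}^M = t_{i…i} M(M-1)⋯(M-K+1) a_{ii}^{M-K}`, so `k`
applications starting from `M = Kk` produce `(Kk)! t_{i…i}^k`.
-/

open MvPolynomial

/-- The trace polynomial `Tr(A^N) = ∑_{c} ∏_s a_{c s, c (s+1)}` in the commuting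
indeterminates `a_{pq}`, the sum over cyclic index sequences `c : Fin N → Fin n`. -/
noncomputable def tracePow (n N : ℕ) : MvPolynomial (Fin n × Fin n) ℂ :=
  ∑ c : Fin N → Fin n, ∏ s : Fin N, X (c s, c (finRotate N s))

/-- The differential operator `ĝ_i = ∑_{i_2,…,i_m} t_{i i_2 … i_m}
∂/∂a_{i i_2} ⋯ ∂/∂a_{i i_m}` (order m = K + 1), acting on polynomials in the a_{pq}. -/
noncomputable def gOp (n K : ℕ) (t : Fin n → (Fin K → Fin n) → ℂ) (i : Fin n)
    (P : MvPolynomial (Fin n × Fin n) ℂ) : MvPolynomial (Fin n × Fin n) ℂ :=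
  ∑ f : Fin K → Fin n,
    C (t i f) * (List.finRange K).foldl (fun Q j => pderiv (i, f j) Q) P

namespace MvPolynomial

variable {σ R : Type*} [CommSemiring R]

noncomputable def pderivList : List σ → Module.End R (MvPolynomial σ R)
  | [] => LinearMap.id
  | w :: l => pderivList l ∘ₗ (pderiv w).toLinearMap

theorem pderivList_apply (l : List σ) (P : MvPolynomial σ R) :
    pderivList l P = l.foldl (fun Q w => pderiv w Q) P := by
  induction l generalizing P with
  | nil => rfl
  | cons w l ih => exact ih _

theorem pderivList_mul_X {l : List σ} {v : σ} (hv : v ∉ l) (P : MvPolynomial σ R) :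
    pderivList l (P * X v) = pderivList l P * X v := by
  induction l generalizing P with
  | nil => rfl
  | cons w l ih =>
    rw [List.mem_cons, not_or] at hv
    obtain ⟨hvw, hvl⟩ := hv
    simp only [pderivList, LinearMap.comp_apply, Derivation.coeFn_coe, pderiv_mul,
      pderiv_X_of_ne hvw, mul_zero, add_zero, ih hvl]

theorem pderivList_replicate_X_pow (v : σ) (r M : ℕ) :
    pderivList (List.replicate r v) (X v ^ M : MvPolynomial σ R) =
      M.descFactorial r • X v ^ (M - r) := by
  induction r generalizing M with
  | zero => simp [pderivList]
  | succ r ih =>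
    cases M with
    | zero => simp [List.replicate_succ, pderivList]
    | succ M =>
      simp only [List.replicate_succ, pderivList, LinearMap.comp_apply, Derivation.coeFn_coe,
        pderiv_pow, pderiv_X_self, mul_one, Nat.add_sub_cancel, ← nsmul_eq_mul, map_nsmul, ih,
        smul_smul, Nat.succ_descFactorial_succ, Nat.add_sub_add_right]

theorem pderivList_X_pow_of_ne {l : List σ} {v w : σ} (hw : w ∈ l) (hne : w ≠ v) (M : ℕ) :
    pderivList l (X v ^ M : MvPolynomial σ R) = 0 := by
  induction l generalizing M with
  | nil => simp at hw
  | cons u l ih =>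
    simp only [pderivList, LinearMap.comp_apply, Derivation.coeFn_coe, pderiv_pow]
    by_cases huv : u = v
    · subst huv
      have hwl : w ∈ l := (List.mem_cons.mp hw).resolve_left hne
      rw [pderiv_X_self, mul_one, ← nsmul_eq_mul, map_nsmul, ih hwl, smul_zero]
    · rw [pderiv_X_of_ne (Ne.symm huv), mul_zero, map_zero]

end MvPolynomial

section

variable {R : Type*} [CommSemiring R] {n K : ℕ} (t : Fin n → (Fin K → Fin n) → R) (i : Fin n)

noncomputable def gOpLinear : Module.End R (MvPolynomial (Fin n × Fin n) R) :=
  ∑ f : Fin K → Fin n, t i f • pderivList ((List.finRange K).map fun j => (i, f j))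

theorem gOpLinear_mul_X {v : Fin n × Fin n} (hv : v.1 ≠ i) (P : MvPolynomial (Fin n × Fin n) R) :
    gOpLinear t i (P * X v) = gOpLinear t i P * X v := by
  have hvl : ∀ f : Fin K → Fin n, v ∉ (List.finRange K).map fun j => (i, f j) := by
    simp only [List.mem_map, not_exists, not_and]
    rintro f j - rfl
    exact hv rfl
  simp only [gOpLinear, LinearMap.sum_apply, LinearMap.smul_apply,
    pderivList_mul_X (hvl _), Finset.sum_mul, smul_mul_assoc]

theorem gOpLinear_pow_mul_X {v : Fin n × Fin n} (hv : v.1 ≠ i) (k : ℕ)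
    (P : MvPolynomial (Fin n × Fin n) R) :
    (gOpLinear t i ^ k) (P * X v) = (gOpLinear t i ^ k) P * X v := by
  have hcomm : Commute (gOpLinear t i) (LinearMap.mulRight R (X v)) :=
    LinearMap.ext fun P => gOpLinear_mul_X t i hv P
  exact LinearMap.congr_fun (hcomm.pow_left k) P

theorem gOpLinear_X_pow (M : ℕ) :
    gOpLinear t i (X (i, i) ^ M) = (t i fun _ => i) • M.descFactorial K • X (i, i) ^ (M - K) := by
  rw [gOpLinear, LinearMap.sum_apply, Finset.sum_eq_single_of_mem (fun _ => i) (Finset.mem_univ _)]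
  · rw [LinearMap.smul_apply, List.map_const', List.length_finRange, pderivList_replicate_X_pow]
  · intro f _ hf
    obtain ⟨j, hj⟩ := Function.ne_iff.mp hf
    have hmem : (i, f j) ∈ (List.finRange K).map fun j => (i, f j) :=
      List.mem_map_of_mem (List.mem_finRange j)
    rw [LinearMap.smul_apply, pderivList_X_pow_of_ne hmem (by simpa using hj), smul_zero]

theorem gOpLinear_pow_X_pow (k : ℕ) :
    (gOpLinear t i ^ k) (X (i, i) ^ (K * k)) = C ((K * k).factorial * (t i fun _ => i) ^ k) := by
  induction k with
  | zero => simp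
  | succ k ih =>
    have hfac : (K * k).factorial * (K * k + K).descFactorial K = (K * k + K).factorial := by
      simpa using Nat.factorial_mul_descFactorial (Nat.le_add_left K (K * k))
    rw [pow_succ, Module.End.mul_apply, Nat.mul_succ, gOpLinear_X_pow, Nat.add_sub_cancel,
      map_smul, map_nsmul, ih, ← hfac, nsmul_eq_mul, smul_eq_C_mul, ← map_natCast C, ← C_mul, ← C_mul]
    congr 1
    push_cast
    ring

theorem eval_zero_gOpLinear_pow_cycle {N : ℕ} (c : Fin N → Fin n) (hc : c ≠ fun _ => i) (k : ℕ) :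
    eval (fun _ => 0) ((gOpLinear t i ^ k) (∏ s : Fin N, X (c s, c (finRotate N s)))) = 0 := by
  obtain ⟨s, hs⟩ := Function.ne_iff.mp hc
  rw [← Finset.prod_erase_mul _ _ (Finset.mem_univ s), gOpLinear_pow_mul_X t i hs, eval_mul,
    eval_X, mul_zero]

end

theorem coe_gOpLinear {n K : ℕ} (t : Fin n → (Fin K → Fin n) → ℂ)
    (i : Fin n) : ⇑(gOpLinear t i) = gOp n K t i := by
  ext P : 1
  simp only [gOpLinear, gOp, LinearMap.sum_apply, LinearMap.smul_apply,
    pderivList_apply, List.foldl_map, C_mul']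

theorem stmt18_general (n K : ℕ) (t : Fin n → (Fin K → Fin n) → ℂ) (i : Fin n) :
    ∀ k : ℕ,
      MvPolynomial.eval (fun _ => (0 : ℂ))
          ((gOp n K t i)^[k] (tracePow n (K * k))) =
        ((K * k).factorial : ℂ) * (t i (fun _ => i)) ^ k := by
  intro k
  rw [tracePow, ← coe_gOpLinear t i, ← Module.End.coe_pow, map_sum, map_sum,
    Finset.sum_eq_single_of_mem (fun _ => i) (Finset.mem_univ _)
      fun c _ hc => eval_zero_gOpLinear_pow_cycle t i c hc k]
  simp only [Finset.prod_const, Finset.card_univ, Fintype.card_fin]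
  rw [gOpLinear_pow_X_pow, eval_C]

/-- For every k ≥ 0, `(ĝ_i)^k Tr(A^{(m-1)k})` evaluated at A = 0 equals
`((m-1)k)! · (t_{i i … i})^k`. -/
theorem stmt18 (n K : ℕ) (hK : 1 ≤ K) (hn : 0 < n)
    (t : Fin n → (Fin K → Fin n) → ℂ) (i : Fin n) :
    ∀ k : ℕ,
      MvPolynomial.eval (fun _ => (0 : ℂ))
          ((gOp n K t i)^[k] (tracePow n (K * k))) =
        ((K * k).factorial : ℂ) * (t i (fun _ => i)) ^ k :=
  stmt18_general n K t i
end
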